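/- In the bivariate normal model with σ_p = σ_c = σ > 0 and regression slope β < 1, the absolute mobility equals A = Φ((μ_c − μ_p)/(σ√(2(1 − β)))); in particular, holding μ_c > μ_p fixed, A → 1 as β → 1⁻. -/

import Mathlib

open MeasureTheory ProbabilityTheory

/-- The cumulative distribution function of the standard normal distribution. -/
noncomputable def stdNormalCDF (t : ℝ) : ℝ := (gaussianReal 0 1 (Set.Iic t)).toReal

/-- The covariance of two real random variables. -/
noncomputable def covar {Ω : Type*} [MeasurableSpace Ω] (μ : Measure Ω) (X Y : Ω → ℝ) : ℝ :=
  ∫ ω, (X ω - ∫ x, X x ∂μ) * (Y ω - ∫ x, Y x ∂μ) ∂μ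

/-- `(Xp, Xc)` is a bivariate Gaussian vector with means `μp, μc`, variances `vp, vc` and
covariance `c`: every linear combination `a • Xp + b • Xc` is Gaussian with the
corresponding mean and variance. -/
def IsBivariateGaussian {Ω : Type*} [MeasurableSpace Ω] (μ : Measure Ω)
    (Xp Xc : Ω → ℝ) (μp μc vp vc c : ℝ) : Prop :=
  ∀ a b : ℝ, Measure.map (fun ω => a * Xp ω + b * Xc ω) μ =
    gaussianReal (a * μp + b * μc) (a ^ 2 * vp + 2 * a * b * c + b ^ 2 * vc).toNNReal

/-!
The difference `Xc - Xp` is Gaussian with mean `μc - μp` and variance `2σ²(1 - β) > 0`, so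
standardizing it turns `P(Xc - Xp > 0)` into `Φ((μc - μp) / (σ √(2(1 - β))))`. As `β → 1⁻` the
standard deviation tends to `0⁺` while the mean difference stays positive, so the argument of `Φ`
tends to `+∞`.
-/

open scoped NNReal

lemma gaussianReal_map_standardize (m : ℝ) {v : ℝ≥0} (hv : v ≠ 0) :
    (gaussianReal m v).map (fun x => (m - x) / √v) = gaussianReal 0 1 := by
  have hv' : (0 : ℝ) < v := by positivity
  rw [show (fun x => (m - x) / √v) = (· / √v) ∘ (m - ·) from rfl,
    ← Measure.map_map (by fun_prop) (by fun_prop), gaussianReal_map_const_sub,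
    gaussianReal_map_div_const, sub_self, zero_div]
  congr
  ext
  simp [Real.sq_sqrt hv'.le, hv'.ne']

lemma gaussianReal_Ioi_zero_eq_Iic (m : ℝ) {v : ℝ≥0} (hv : v ≠ 0) :
    gaussianReal m v (Set.Ioi 0) = gaussianReal 0 1 (Set.Iic (m / √v)) := by
  have hs : 0 < √(v : ℝ) := Real.sqrt_pos.2 (by positivity)
  have hpre : (fun x => (m - x) / √v) ⁻¹' Set.Iic (m / √v) = Set.Ici 0 := by
    ext x
    simp [div_le_div_iff_of_pos_right hs]
  rw [← gaussianReal_map_standardize m hv, Measure.map_apply (by fun_prop) measurableSet_Iic, hpre]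
  exact measure_congr (Ioi_ae_eq_Ici' (gaussianReal_absolutelyContinuous m hv (measure_singleton 0)))

lemma toReal_measure_setOf_pos_eq_stdNormalCDF {Ω : Type*} [MeasurableSpace Ω] {μ : Measure Ω}
    {Y : Ω → ℝ} {m : ℝ} {v : ℝ≥0} (hv : v ≠ 0) (hY : μ.map Y = gaussianReal m v) :
    (μ {ω | 0 < Y ω}).toReal = stdNormalCDF (m / √v) := by
  have hY_meas : AEMeasurable Y μ := aemeasurable_of_map_neZero (by rw [hY]; infer_instance)
  rw [stdNormalCDF, ← gaussianReal_Ioi_zero_eq_Iic m hv, ← hY,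
    Measure.map_apply_of_aemeasurable hY_meas measurableSet_Ioi]
  rfl

lemma IsBivariateGaussian.map_sub {Ω : Type*} [MeasurableSpace Ω] {μ : Measure Ω}
    {Xp Xc : Ω → ℝ} {μp μc vp vc c : ℝ} (h : IsBivariateGaussian μ Xp Xc μp μc vp vc c) :
    μ.map (fun ω => Xc ω - Xp ω) = gaussianReal (μc - μp) (vp + vc - 2 * c).toNNReal := by
  have hlin : (fun ω => Xc ω - Xp ω) = fun ω => -1 * Xp ω + 1 * Xc ω :=
    funext fun ω => by ring
  rw [hlin, h, show -1 * μp + 1 * μc = μc - μp by ring,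
    show (-1) ^ 2 * vp + 2 * -1 * 1 * c + 1 ^ 2 * vc = vp + vc - 2 * c by ring]

lemma tendsto_stdNormalCDF_atTop : Filter.Tendsto stdNormalCDF Filter.atTop (nhds 1) := by
  have h := tendsto_measure_Iic_atTop (gaussianReal 0 1)
  rw [measure_univ] at h
  exact (ENNReal.tendsto_toReal ENNReal.one_ne_top).comp h

lemma tendsto_div_mul_sqrt_one_sub_atTop {d σ : ℝ} (hd : 0 < d) (hσ : 0 < σ) :
    Filter.Tendsto (fun b : ℝ => d / (σ * √(2 * (1 - b))))
      (nhdsWithin 1 (Set.Iio 1)) Filter.atTop := by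
  have hden : Filter.Tendsto (fun b : ℝ => σ * √(2 * (1 - b)))
      (nhdsWithin 1 (Set.Iio 1)) (nhdsWithin 0 (Set.Ioi 0)) := by
    refine tendsto_nhdsWithin_iff.2 ⟨?_, ?_⟩
    · have hc : Continuous (fun b : ℝ => σ * √(2 * (1 - b))) := by fun_prop
      simpa using (hc.tendsto 1).mono_left nhdsWithin_le_nhds
    · filter_upwards [self_mem_nhdsWithin] with b (hb : b < 1)
      have : 0 < 2 * (1 - b) := by linarith
      exact Set.mem_Ioi.2 (by positivity)
  simp_rw [div_eq_mul_inv]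
  exact hden.inv_tendsto_nhdsGT_zero.const_mul_atTop hd

theorem absolute_mobility_equal_variances_general {Ω : Type*} [MeasurableSpace Ω]
    (μ : Measure Ω) (Xp Xc : Ω → ℝ)
    (μp μc σ β : ℝ) (hσ : 0 < σ) (hβ : β < 1) (hμ : μp < μc)
    (h : IsBivariateGaussian μ Xp Xc μp μc (σ ^ 2) (σ ^ 2) (σ ^ 2 * β)) :
    (μ {ω | Xp ω < Xc ω}).toReal =
      stdNormalCDF ((μc - μp) / (σ * Real.sqrt (2 * (1 - β)))) ∧
    Filter.Tendsto (fun b : ℝ =>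
        stdNormalCDF ((μc - μp) / (σ * Real.sqrt (2 * (1 - b)))))
      (nhdsWithin 1 (Set.Iio 1)) (nhds 1) := by
  refine ⟨?_, tendsto_stdNormalCDF_atTop.comp
    (tendsto_div_mul_sqrt_one_sub_atTop (sub_pos.2 hμ) hσ)⟩
  have hvar : σ ^ 2 + σ ^ 2 - 2 * (σ ^ 2 * β) = σ ^ 2 * (2 * (1 - β)) := by ring
  have hvar_pos : 0 < σ ^ 2 * (2 * (1 - β)) := by
    have : 0 < 1 - β := sub_pos.2 hβ
    positivity
  have hsd : √((σ ^ 2 * (2 * (1 - β))).toNNReal : ℝ) = σ * √(2 * (1 - β)) := by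
    rw [Real.coe_toNNReal _ hvar_pos.le, Real.sqrt_mul (sq_nonneg σ), Real.sqrt_sq hσ.le]
  have hlaw := h.map_sub
  rw [hvar] at hlaw
  have hset : {ω | Xp ω < Xc ω} = {ω | 0 < Xc ω - Xp ω} := by simp_rw [sub_pos]
  rw [hset, ← hsd]
  exact toReal_measure_setOf_pos_eq_stdNormalCDF (by simpa using hvar_pos) hlaw

theorem absolute_mobility_equal_variances {Ω : Type*} [MeasurableSpace Ω]
    (μ : Measure Ω) [IsProbabilityMeasure μ] (Xp Xc : Ω → ℝ)
    (μp μc σ β : ℝ) (hσ : 0 < σ) (hβ : β < 1) (hμ : μp < μc)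
    (h : IsBivariateGaussian μ Xp Xc μp μc (σ ^ 2) (σ ^ 2) (σ ^ 2 * β)) :
    (μ {ω | Xp ω < Xc ω}).toReal =
      stdNormalCDF ((μc - μp) / (σ * Real.sqrt (2 * (1 - β)))) ∧
    Filter.Tendsto (fun b : ℝ =>
        stdNormalCDF ((μc - μp) / (σ * Real.sqrt (2 * (1 - b)))))
      (nhdsWithin 1 (Set.Iio 1)) (nhds 1) :=
  absolute_mobility_equal_variances_general μ Xp Xc μp μc σ β hσ hβ hμ h
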